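/- arXiv:1901.09712 — 3 statements merged into one kernel-verified Lean document; each statement's English description precedes it below -/
import Mathlib

section
/- Let n ≥ 1 samples x^(1),…,x^(n) ∈ {0,1}^d be given, let λ > 0 and γ > 0, and let Ω' and T' be linear subspaces of Sym(d) with Ω' ∩ T' = {0}. Then the tangent-space constrained problem min over (S, L) ∈ Ω' × T' of ℓ(S+L) + λ(γ‖S‖₁ + ‖L‖_*) is feasible and has a unique solution. (In particular, the Ising negative log-likelihood Θ ↦ ℓ(Θ) is strictly convex on Sym(d), and the objective is strictly convex on Ω' × T'.) -/
noncomputable section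

open scoped BigOperators
open Matrix

namespace IsingSL

/-- The space of real `d × d` matrices.  Symmetry (membership in `Sym(d)`) is imposed
through explicit hypotheses `Matrix.IsSymm`. -/
abbrev Mat (d : ℕ) := Matrix (Fin d) (Fin d) ℝ

/-- The trace inner product `⟨A, B⟩ = tr(Aᵀ B)`. -/
def minner {d : ℕ} (A B : Mat d) : ℝ := (Aᵀ * B).trace

/-- Entrywise `ℓ∞`-norm of a matrix. -/
def normInf {d : ℕ} (M : Mat d) : ℝ := ⨆ p : Fin d × Fin d, |M p.1 p.2|

/-- Entrywise `ℓ1`-norm of a matrix. -/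
def norm1 {d : ℕ} (M : Mat d) : ℝ := ∑ i, ∑ j, |M i j|

/-- Euclidean norm of a vector. -/
def vnorm {d : ℕ} (v : Fin d → ℝ) : ℝ := Real.sqrt (∑ i, v i ^ 2)

/-- Spectral norm (`ℓ2`-operator norm) of a matrix. -/
def specNorm {d : ℕ} (M : Mat d) : ℝ :=
  sSup {t | ∃ v : Fin d → ℝ, vnorm v ≤ 1 ∧ t = vnorm (M.mulVec v)}

/-- Nuclear norm of a matrix (sum of singular values), characterized via
trace duality with the spectral norm. -/
def nucNorm {d : ℕ} (M : Mat d) : ℝ :=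
  sSup {t | ∃ B : Mat d, specNorm B ≤ 1 ∧ t = minner M B}

/-- The `γ`-norm of a pair of matrices: `‖(S, L)‖_γ = max {‖S‖_∞/γ, ‖L‖}`. -/
def ganorm {d : ℕ} (γ : ℝ) (S L : Mat d) : ℝ := max (normInf S / γ) (specNorm L)

/-- The `{0,1}`-vector corresponding to `x : Fin d → Bool`. -/
def b2r {d : ℕ} (x : Fin d → Bool) : Fin d → ℝ := fun i => if x i then 1 else 0

/-- The sufficient statistics `Φ(x) = x xᵀ` for `x ∈ {0,1}^d`. -/
def phi {d : ℕ} (x : Fin d → Bool) : Mat d := Matrix.of fun i j => b2r x i * b2r x j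

/-- The log-partition function `a(Θ)` of the pairwise Ising model. -/
def logA {d : ℕ} (Θ : Mat d) : ℝ :=
  Real.log (∑ x : Fin d → Bool, Real.exp (minner Θ (phi x)))

/-- The Ising probability mass function `p(x) = exp(⟨Θ, Φ(x)⟩ - a(Θ))`. -/
def isingPMF {d : ℕ} (Θ : Mat d) (x : Fin d → Bool) : ℝ :=
  Real.exp (minner Θ (phi x) - logA Θ)

/-- `Φ* = E_Θ[Φ]`, the expected sufficient statistics; this is the gradient `∇a(Θ)`
of the log-partition function w.r.t. the trace inner product. -/
def meanPhi {d : ℕ} (Θ : Mat d) : Mat d := ∑ x : Fin d → Bool, isingPMF Θ x • phi x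

/-- The Hessian `∇²a(Θ)` of the log-partition function as a linear operator on matrices;
it is the covariance operator `M ↦ E[⟨Φ,M⟩Φ] - ⟨E[Φ],M⟩E[Φ]` of the sufficient statistics. -/
def hessA {d : ℕ} (Θ : Mat d) (M : Mat d) : Mat d :=
  (∑ x : Fin d → Bool, (isingPMF Θ x * minner (phi x) M) • phi x)
    - minner (meanPhi Θ) M • meanPhi Θ

/-- The empirical second-moment matrix `Φ^n` of a sample. -/
def empPhi {d n : ℕ} (xs : Fin n → (Fin d → Bool)) : Mat d :=
  (n : ℝ)⁻¹ • ∑ k, phi (xs k)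

/-- The negative log-likelihood `ℓ(Θ) = a(Θ) - ⟨Θ, Φ^n⟩`. -/
def nll {d : ℕ} (Phin Θ : Mat d) : ℝ := logA Θ - minner Θ Phin

/-- The probability of the event `E` under `n` i.i.d. samples from the Ising
distribution with parameter `Θ`. -/
def samplesProb {d : ℕ} (Θ : Mat d) (n : ℕ) (E : Set (Fin n → (Fin d → Bool))) : ℝ :=
  ∑ xs : Fin n → (Fin d → Bool), E.indicator (fun ys => ∏ k, isingPMF Θ (ys k)) xs

/-- Probability vectors on `{0,1}^d`. -/
def IsProbVec {d : ℕ} (p : (Fin d → Bool) → ℝ) : Prop :=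
  (∀ x, 0 ≤ p x) ∧ ∑ x : Fin d → Bool, p x = 1

/-- The (Shannon) entropy `H(p) = -Σ_x p(x) log p(x)` (with `0 log 0 = 0`). -/
def entropy {d : ℕ} (p : (Fin d → Bool) → ℝ) : ℝ :=
  -∑ x : Fin d → Bool, p x * Real.log (p x)

/-- The expectation `E_p[Φ]` of the sufficient statistics under `p`. -/
def Ephi {d : ℕ} (p : (Fin d → Bool) → ℝ) : Mat d :=
  ∑ x : Fin d → Bool, p x • phi x

/-- The linear identification of `d × d` matrices with the euclidean space on `d·d`
coordinates; under this identification the euclidean inner product corresponds to the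
trace inner product on matrices. -/
def matEuclid (d : ℕ) : Mat d ≃ₗ[ℝ] EuclideanSpace ℝ (Fin d × Fin d) where
  toFun M := WithLp.toLp 2 (fun p => M p.1 p.2)
  invFun v := Matrix.of fun i j => v (i, j)
  map_add' _ _ := rfl
  map_smul' _ _ := rfl
  left_inv _ := rfl
  right_inv _ := rfl

/-- Orthogonal projection onto a subspace `V` of `Mat d`, w.r.t. the trace inner product. -/
def proj {d : ℕ} (V : Submodule ℝ (Mat d)) (M : Mat d) : Mat d :=
  (matEuclid d).symm
    ((Submodule.orthogonalProjectionOnto (V.map ((matEuclid d) : Mat d →ₗ[ℝ] EuclideanSpace ℝ (Fin d × Fin d)))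
      ((matEuclid d) M) : EuclideanSpace ℝ (Fin d × Fin d)))

/-- Projection onto the orthogonal complement of `V`. -/
def projPerp {d : ℕ} (V : Submodule ℝ (Mat d)) (M : Mat d) : Mat d := M - proj V M

/-- The twisting `ρ(T, T') = max_{‖M‖=1} ‖(P_T - P_{T'}) M‖` between two subspaces. -/
def rho {d : ℕ} (T T' : Submodule ℝ (Mat d)) : ℝ :=
  sSup {t | ∃ M : Mat d, specNorm M = 1 ∧ t = specNorm (proj T M - proj T' M)}

/-- `ξ(T)`: the smallest `ξ` with `‖M‖_∞ ≤ ξ ‖M‖` for all `M ∈ T`. -/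
def xi {d : ℕ} (T : Submodule ℝ (Mat d)) : ℝ :=
  sInf {c | ∀ M ∈ T, normInf M ≤ c * specNorm M}

/-- `μ(Ω)`: the smallest `μ` with `‖N‖ ≤ μ ‖N‖_∞` for all `N ∈ Ω`. -/
def mu {d : ℕ} (Om : Submodule ℝ (Mat d)) : ℝ :=
  sInf {c | ∀ N ∈ Om, specNorm N ≤ c * normInf N}

/-- `Ω(S) = {M ∈ Sym(d) : supp(M) ⊆ supp(S)}`, the tangent space at `S` to the variety
of symmetric matrices with at most `|supp S|` nonzero entries. -/
def OmegaS {d : ℕ} (S : Mat d) : Submodule ℝ (Mat d) where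
  carrier := {M | M.IsSymm ∧ ∀ i j, S i j = 0 → M i j = 0}
  add_mem' := by
    rintro a b ⟨ha, ha0⟩ ⟨hb, hb0⟩
    refine ⟨?_, fun i j h => ?_⟩
    · show (a + b)ᵀ = a + b
      rw [Matrix.transpose_add, ha, hb]
    · show a i j + b i j = 0
      rw [ha0 i j h, hb0 i j h, add_zero]
  zero_mem' := by
    refine ⟨?_, fun i j _ => rfl⟩
    show (0 : Mat _)ᵀ = 0
    rw [Matrix.transpose_zero]
  smul_mem' := by
    rintro c a ⟨ha, ha0⟩
    refine ⟨?_, fun i j h => ?_⟩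
    · show (c • a)ᵀ = c • a
      rw [Matrix.transpose_smul, ha]
    · show c * a i j = 0
      rw [ha0 i j h, mul_zero]

/-- `T(L) = {U Xᵀ + X Uᵀ : X ∈ ℝ^{d×r}}`, the tangent space at `L = U D Uᵀ` to the
variety of symmetric matrices of rank at most `r`. -/
def TSpace {d r : ℕ} (U : Matrix (Fin d) (Fin r) ℝ) : Submodule ℝ (Mat d) where
  carrier := {M | ∃ X : Matrix (Fin d) (Fin r) ℝ, M = U * Xᵀ + X * Uᵀ}
  add_mem' := by
    rintro a b ⟨X, rfl⟩ ⟨Y, rfl⟩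
    exact ⟨X + Y, by rw [Matrix.transpose_add, Matrix.mul_add, Matrix.add_mul]; abel⟩
  zero_mem' := ⟨0, by simp⟩
  smul_mem' := by
    rintro c a ⟨X, rfl⟩
    exact ⟨c • X, by rw [Matrix.transpose_smul, Matrix.mul_smul, Matrix.smul_mul, smul_add]⟩

/-- `T'` is the tangent space `T(L')` at some rank-`r` symmetric matrix
`L' = U D Uᵀ` (restricted eigenvalue decomposition: `U` with orthonormal columns,
`D` invertible diagonal). -/
def IsTangentSpace (d r : ℕ) (T' : Submodule ℝ (Mat d)) : Prop :=
  ∃ (U : Matrix (Fin d) (Fin r) ℝ) (D : Matrix (Fin r) (Fin r) ℝ),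
    Uᵀ * U = 1 ∧ D.IsDiag ∧ IsUnit D.det ∧ T' = TSpace U

/-- A solution of the tangent-space constrained problem
`min_{(S,L) ∈ Om × T'} ℓ(S+L) + λ(γ‖S‖₁ + ‖L‖_*)`. -/
def IsYSol {d : ℕ} (Om T' : Submodule ℝ (Mat d)) (Phin : Mat d) (lam γ : ℝ)
    (p : Mat d × Mat d) : Prop :=
  p.1 ∈ Om ∧ p.2 ∈ T' ∧
    ∀ q : Mat d × Mat d, q.1 ∈ Om → q.2 ∈ T' →
      nll Phin (p.1 + p.2) + lam * (γ * norm1 p.1 + nucNorm p.2) ≤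
        nll Phin (q.1 + q.2) + lam * (γ * norm1 q.1 + nucNorm q.2)

/-- A solution of the convex program
`min_{S, L ∈ Sym(d), L ⪰ 0} ℓ(S+L) + λ(γ‖S‖₁ + tr L)`. -/
def IsSLSol {d : ℕ} (Phin : Mat d) (lam γ : ℝ) (p : Mat d × Mat d) : Prop :=
  p.1.IsSymm ∧ p.2.PosSemidef ∧
    ∀ q : Mat d × Mat d, q.1.IsSymm → q.2.PosSemidef →
      nll Phin (p.1 + p.2) + lam * (γ * norm1 p.1 + p.2.trace) ≤
        nll Phin (q.1 + q.2) + lam * (γ * norm1 q.1 + q.2.trace)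

/-- The setup: a nonzero symmetric matrix `S*` and a positive-semidefinite `L*` with
restricted eigenvalue decomposition `L* = U D Uᵀ` (so `L*` has rank `r`). -/
structure Setup (d r : ℕ) where
  Sstar : Mat d
  U : Matrix (Fin d) (Fin r) ℝ
  Dg : Matrix (Fin r) (Fin r) ℝ
  hU : Uᵀ * U = 1
  hDdiag : Dg.IsDiag
  hDunit : IsUnit Dg.det
  hSsymm : Sstar.IsSymm
  hSne : Sstar ≠ 0
  hLpsd : (U * Dg * Uᵀ).PosSemidef

namespace Setup

variable {d r : ℕ} (C : Setup d r)

/-- `L* = U D Uᵀ`. -/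
def Lstar : Mat d := C.U * C.Dg * C.Uᵀ

/-- `Θ* = S* + L*`. -/
def Thstar : Mat d := C.Sstar + C.Lstar

/-- `Ω = Ω(S*)`. -/
def Om : Submodule ℝ (Mat d) := OmegaS C.Sstar

/-- `T = T(L*)`. -/
def Tt : Submodule ℝ (Mat d) := TSpace C.U

/-- `H* = ∇²a(Θ*)`, the Hessian of the log-partition function at `Θ*`. -/
def Hop : Mat d → Mat d := hessA C.Thstar

/-- `‖H*‖`, the operator norm of `H*` w.r.t. the spectral norm. -/
def HopNorm : ℝ := sSup {t | ∃ M : Mat d, specNorm M = 1 ∧ t = specNorm (C.Hop M)}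

/-- `ξ(T)`. -/
def xiT : ℝ := xi C.Tt

/-- `μ(Ω)`. -/
def muOm : ℝ := mu C.Om

/-- `α_Ω = min {‖P_Ω H*(M)‖_∞ : M ∈ Ω, ‖M‖_∞ = 1}`. -/
def alphaOm : ℝ :=
  sInf {t | ∃ M, M ∈ C.Om ∧ normInf M = 1 ∧ t = normInf (proj C.Om (C.Hop M))}

/-- `α_{T,ε}`. -/
def alphaT (ε : ℝ) : ℝ :=
  sInf {t | ∃ T' : Submodule ℝ (Mat d), IsTangentSpace d r T' ∧ rho C.Tt T' ≤ ε ∧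
    ∃ M, M ∈ T' ∧ specNorm M = 1 ∧ t = specNorm (proj T' (C.Hop M))}

/-- `δ_Ω = max {‖P_{Ω^⊥} H*(M)‖_∞ : M ∈ Ω, ‖M‖_∞ = 1}`. -/
def deltaOm : ℝ :=
  sSup {t | ∃ M, M ∈ C.Om ∧ normInf M = 1 ∧ t = normInf (projPerp C.Om (C.Hop M))}

/-- `δ_{T,ε}`. -/
def deltaT (ε : ℝ) : ℝ :=
  sSup {t | ∃ T' : Submodule ℝ (Mat d), IsTangentSpace d r T' ∧ rho C.Tt T' ≤ ε ∧
    ∃ M, M ∈ T' ∧ specNorm M = 1 ∧ t = specNorm (projPerp T' (C.Hop M))}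

/-- `β_Ω = max {‖H*(M)‖ : M ∈ Ω, ‖M‖ = 1}`. -/
def betaOm : ℝ :=
  sSup {t | ∃ M, M ∈ C.Om ∧ specNorm M = 1 ∧ t = specNorm (C.Hop M)}

/-- `β_T`. -/
def betaT : ℝ :=
  sSup {t | ∃ T' : Submodule ℝ (Mat d), IsTangentSpace d r T' ∧ rho C.Tt T' ≤ C.xiT / 2 ∧
    ∃ M, M ∈ T' ∧ normInf M = 1 ∧ t = normInf (C.Hop M)}

/-- `β = max {β_Ω, β_T}`. -/
def betaC : ℝ := max C.betaOm C.betaT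

/-- `α = min {α_Ω, α_{T,ξ(T)/2}}`. -/
def alphaC : ℝ := min C.alphaOm (C.alphaT (C.xiT / 2))

/-- `δ = max {δ_Ω, δ_{T,ξ(T)/2}}`. -/
def deltaC : ℝ := max C.deltaOm (C.deltaT (C.xiT / 2))

/-- The stability assumption: `α > 0` and `δ/α ≤ 1 - 2ν` for some `ν ∈ (0, 1/2]`. -/
def Stability (ν : ℝ) : Prop :=
  0 < C.alphaC ∧ 0 < ν ∧ ν ≤ 1 / 2 ∧ C.deltaC / C.alphaC ≤ 1 - 2 * ν

/-- `γ_min = 3β(2-ν)ξ(T)/(να)`. -/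
def gammaMin (ν : ℝ) : ℝ := 3 * C.betaC * (2 - ν) * C.xiT / (ν * C.alphaC)

/-- `γ_max = να/(2β(2-ν)μ(Ω))`. -/
def gammaMax (ν : ℝ) : ℝ := ν * C.alphaC / (2 * C.betaC * (2 - ν) * C.muOm)

/-- The `γ`-feasibility assumption: the range `[γ_min, γ_max]` is non-empty. -/
def GammaFeasible (ν : ℝ) : Prop := C.gammaMin ν ≤ C.gammaMax ν

/-- `ω = max {να/(3β(2-ν)), 1}`. -/
def omg (ν : ℝ) : ℝ := max (ν * C.alphaC / (3 * C.betaC * (2 - ν))) 1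

/-- `c₂ = 40/α + 1/‖H*‖`. -/
def c2 : ℝ := 40 / C.alphaC + 1 / C.HopNorm

/-- `c₃ = (6(2-ν)/ν + 1) c₂² ‖H*‖ ω`. -/
def c3 (ν : ℝ) : ℝ := (6 * (2 - ν) / ν + 1) * C.c2 ^ 2 * C.HopNorm * C.omg ν

/-- `c₄ = c₂ + 3αc₂²(2-ν)/(16(3-ν))`. -/
def c4 (ν : ℝ) : ℝ := C.c2 + 3 * C.alphaC * C.c2 ^ 2 * (2 - ν) / (16 * (3 - ν))

/-- `c₅ = max {c₃, c₄}`. -/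
def c5 (ν : ℝ) : ℝ := max (C.c3 ν) (C.c4 ν)

/-- `c₆ = ναc₂/(2β(2-ν))`. -/
def c6 (ν : ℝ) : ℝ := ν * C.alphaC * C.c2 / (2 * C.betaC * (2 - ν))

/-- `c₀ = 2 l(r₀) ω max{να/(2β(2-ν)), 1}²`. -/
def c0 (ν l0 : ℝ) : ℝ :=
  2 * l0 * C.omg ν * (max (ν * C.alphaC / (2 * C.betaC * (2 - ν))) 1) ^ 2

/-- `c₁ = max{1, να/(2β(2-ν))}⁻¹ r₀/2`. -/
def c1 (ν r0 : ℝ) : ℝ :=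
  (max 1 (ν * C.alphaC / (2 * C.betaC * (2 - ν))))⁻¹ * r0 / 2

/-- `s_min`, the smallest absolute value of a nonzero entry of `S*`. -/
def smin : ℝ := sInf {t | ∃ i j, C.Sstar i j ≠ 0 ∧ t = |C.Sstar i j|}

/-- `σ_min`, the smallest nonzero eigenvalue of `L*`. -/
def sigmin : ℝ := sInf {t | t ≠ 0 ∧ ∃ i, t = C.hLpsd.1.eigenvalues i}

/-- The gap assumption: `s_min ≥ c₆λ_n/μ(Ω)` and `σ_min ≥ c₅λ_n/ξ(T)²`. -/
def GapAssumption (ν lam : ℝ) : Prop :=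
  C.c6 ν * lam / C.muOm ≤ C.smin ∧ C.c5 ν * lam / C.xiT ^ 2 ≤ C.sigmin

/-- `l0` is a Lipschitz constant (in operator norm w.r.t. the spectral norm) of the
Hessian `∇²a` on the ball `{Θ : ‖Θ - Θ*‖ ≤ r0}`. -/
def HessLip (r0 l0 : ℝ) : Prop :=
  ∀ Θ Θ' : Mat d, specNorm (Θ - C.Thstar) ≤ r0 → specNorm (Θ' - C.Thstar) ≤ r0 →
    ∀ M : Mat d, specNorm (hessA Θ M - hessA Θ' M) ≤ l0 * specNorm (Θ - Θ') * specNorm M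

/-- The correct model set `M`. -/
def Mset (γ ν lam : ℝ) : Set (Mat d × Mat d) :=
  {p | p.1 ∈ C.Om ∧ p.2.IsSymm ∧ p.2.rank ≤ C.Lstar.rank ∧
    ganorm γ (C.Hop ((p.1 - C.Sstar) + (p.2 - C.Lstar)))
      (C.Hop ((p.1 - C.Sstar) + (p.2 - C.Lstar))) ≤ 9 * lam ∧
    specNorm (projPerp C.Tt (p.2 - C.Lstar)) ≤ C.xiT * lam / (C.omg ν * C.HopNorm)}

end Setup

/-! The log-partition function is the log-sum-exp of the linear forms `Θ ↦ ⟨Θ, Φ(x)⟩`.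
Normalising `exp u` and `exp v` to probability vectors and summing the strict convexity of `exp`
shows that log-sum-exp is strictly convex along the segment from `u` to `v` unless `u - v` is
constant. For `u, v` coming from symmetric parameters `A ≠ B` it is not constant: a symmetric `Δ`
with `⟨Δ, Φ(x)⟩` independent of `x` vanishes, as the test points `x = e_i` and `x = e_i + e_j`
show. So `ℓ` is strictly convex on `Sym(d)`, and since `Ω' ∩ T' = {0}` makes `(S, L) ↦ S + L`
injective on `Ω' × T'`, so is the objective there; this gives uniqueness.

For existence, `ℓ ≥ 0` because `⟨Θ, Φ(x)⟩ ≤ a(Θ)` for every `x`, and both `‖·‖₁` and `‖·‖_*`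
dominate every entry (for `‖·‖_*`, pair with a signed matrix unit), so the sublevel sets of the
objective on the closed set `Ω' × T'` lie in compact boxes. -/

end IsingSL

section LogSumExp

variable {ι : Type*} [Fintype ι]

def logSumExp (u : ι → ℝ) : ℝ := Real.log (∑ x, Real.exp (u x))

lemma sum_exp_sub_logSumExp [Nonempty ι] (u : ι → ℝ) :
    ∑ x, Real.exp (u x - logSumExp u) = 1 := by
  have hpos : 0 < ∑ x, Real.exp (u x) :=
    Finset.sum_pos (fun x _ => Real.exp_pos _) Finset.univ_nonempty
  simp only [Real.exp_sub, logSumExp, Real.exp_log hpos, ← Finset.sum_div, div_self hpos.ne']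

theorem logSumExp_convex_comb_lt {u v : ι → ℝ} (huv : ∃ x y, u x - v x ≠ u y - v y)
    {a b : ℝ} (ha : 0 < a) (hb : 0 < b) (hab : a + b = 1) :
    logSumExp (a • u + b • v) < a * logSumExp u + b * logSumExp v := by
  obtain ⟨x₀, y₀, hxy⟩ := huv
  have : Nonempty ι := ⟨x₀⟩
  set s : ι → ℝ := fun x => u x - logSumExp u
  set t : ι → ℝ := fun x => v x - logSumExp v
  have hst : ∃ x, s x ≠ t x := by
    by_contra! h
    exact hxy (by linarith [h x₀, h y₀])
  have hsum : ∑ x, Real.exp (a * s x + b * t x) < 1 := by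
    calc ∑ x, Real.exp (a * s x + b * t x)
        < ∑ x, (a * Real.exp (s x) + b * Real.exp (t x)) := by
          refine Finset.sum_lt_sum (fun x _ => convexOn_exp.2 (Set.mem_univ _) (Set.mem_univ _)
            ha.le hb.le hab) ?_
          obtain ⟨x, hx⟩ := hst
          exact ⟨x, Finset.mem_univ x,
            strictConvexOn_exp.2 (Set.mem_univ _) (Set.mem_univ _) hx ha hb hab⟩
      _ = 1 := by
          rw [Finset.sum_add_distrib, ← Finset.mul_sum, ← Finset.mul_sum,
            sum_exp_sub_logSumExp, sum_exp_sub_logSumExp, mul_one, mul_one, hab]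
  have hshift : ∀ x,
      a * s x + b * t x = (a • u + b • v) x - (a * logSumExp u + b * logSumExp v) :=
    fun x => by simp only [s, t, Pi.add_apply, Pi.smul_apply, smul_eq_mul]; ring
  simp only [hshift, Real.exp_sub, ← Finset.sum_div] at hsum
  rw [div_lt_one (Real.exp_pos _)] at hsum
  exact (Real.log_lt_iff_lt_exp (Finset.sum_pos (fun x _ => Real.exp_pos _)
    Finset.univ_nonempty)).2 hsum

end LogSumExp

theorem StrictConvexOn.comp_linearMap_of_injOn {𝕜 E F β : Type*} [Semiring 𝕜] [PartialOrder 𝕜]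
    [AddCommMonoid E] [AddCommMonoid F] [Module 𝕜 E] [Module 𝕜 F] [AddCommMonoid β]
    [PartialOrder β] [SMul 𝕜 β] {f : F → β} {s : Set F} {t : Set E} (hf : StrictConvexOn 𝕜 s f)
    (g : E →ₗ[𝕜] F) (ht : Convex 𝕜 t) (hts : Set.MapsTo g t s) (hg : Set.InjOn g t) :
    StrictConvexOn 𝕜 t (f ∘ g) :=
  ⟨ht, fun x hx y hy hxy a b ha hb hab => by
    simpa only [Function.comp_apply, map_add, map_smul] using
      hf.2 (hts hx) (hts hy) (fun h => hxy (hg hx hy h)) ha hb hab⟩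

namespace IsingSL

section TraceInner

variable {d : ℕ}

lemma minner_eq_sum (A B : Mat d) : minner A B = ∑ i, ∑ j, A i j * B i j := by
  simp only [minner, Matrix.trace, Matrix.diag_apply, Matrix.mul_apply, Matrix.transpose_apply]
  exact Finset.sum_comm

lemma minner_add_left (A B C : Mat d) : minner (A + B) C = minner A C + minner B C := by
  simp [minner, Matrix.add_mul, Matrix.trace_add]

lemma minner_sub_left (A B C : Mat d) : minner (A - B) C = minner A C - minner B C := by
  simp [minner, Matrix.sub_mul, Matrix.trace_sub]

lemma minner_smul_left (c : ℝ) (A B : Mat d) : minner (c • A) B = c * minner A B := by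
  simp [minner, Matrix.trace_smul]

lemma minner_smul_right (c : ℝ) (A B : Mat d) : minner A (c • B) = c * minner A B := by
  simp [minner, Matrix.trace_smul]

lemma minner_sum_right {ι : Type*} (s : Finset ι) (A : Mat d) (f : ι → Mat d) :
    minner A (∑ k ∈ s, f k) = ∑ k ∈ s, minner A (f k) := by
  simp [minner, Matrix.mul_sum, Matrix.trace_sum]

lemma minner_zero_right (A : Mat d) : minner A 0 = 0 := by
  simp [minner]

lemma continuous_minner_left (P : Mat d) : Continuous fun Θ : Mat d => minner Θ P :=
  (continuous_id.matrix_transpose.matrix_mul continuous_const).matrix_trace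

end TraceInner

section Likelihood

variable {d : ℕ}

lemma logA_eq_logSumExp (Θ : Mat d) : logA Θ = logSumExp fun x => minner Θ (phi x) := rfl

lemma minner_phi_indicator (Δ : Mat d) (s : Finset (Fin d)) :
    minner Δ (phi fun k => decide (k ∈ s)) = ∑ i ∈ s, ∑ j ∈ s, Δ i j := by
  simp [minner_eq_sum, phi, b2r, mul_ite, Finset.sum_ite_mem]

theorem eq_zero_of_minner_phi_const {Δ : Mat d} (hΔ : Δ.IsSymm)
    (hconst : ∀ x y, minner Δ (phi x) = minner Δ (phi y)) : Δ = 0 := by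
  have hblock : ∀ s : Finset (Fin d), ∑ i ∈ s, ∑ j ∈ s, Δ i j = 0 := fun s => by
    rw [← minner_phi_indicator, hconst _ (fun k => decide (k ∈ (∅ : Finset (Fin d)))),
      minner_phi_indicator, Finset.sum_empty]
  have hdiag : ∀ i, Δ i i = 0 := fun i => by simpa using hblock {i}
  ext i j
  rcases eq_or_ne i j with rfl | hij
  · exact hdiag i
  · have hpair := hblock {i, j}
    rw [Finset.sum_pair hij, Finset.sum_pair hij, Finset.sum_pair hij, hdiag, hdiag,
      hΔ.apply i j] at hpair
    simp only [Matrix.zero_apply]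
    linarith

lemma minner_phi_le_logA (Θ : Mat d) (x : Fin d → Bool) : minner Θ (phi x) ≤ logA Θ := by
  rw [← Real.log_exp (minner Θ (phi x))]
  exact Real.log_le_log (Real.exp_pos _) (Finset.single_le_sum
    (f := fun x => Real.exp (minner Θ (phi x))) (fun _ _ => (Real.exp_pos _).le)
    (Finset.mem_univ x))

lemma logA_nonneg (Θ : Mat d) : 0 ≤ logA Θ := by
  simpa [minner_eq_sum, phi, b2r] using minner_phi_le_logA Θ fun _ => false

lemma minner_empPhi_le_logA {n : ℕ} (xs : Fin n → (Fin d → Bool)) (Θ : Mat d) :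
    minner Θ (empPhi xs) ≤ logA Θ := by
  have hsum : ∑ k, minner Θ (phi (xs k)) ≤ n * logA Θ := by
    simpa using Finset.sum_le_sum fun k (_ : k ∈ Finset.univ) => minner_phi_le_logA Θ (xs k)
  -- `0⁻¹ = 0`: for `n = 0` the bound is `logA_nonneg`.
  have hn : (n : ℝ)⁻¹ * n ≤ 1 := by
    rcases eq_or_ne (n : ℝ) 0 with h | h <;> simp [h]
  calc minner Θ (empPhi xs) = (n : ℝ)⁻¹ * ∑ k, minner Θ (phi (xs k)) := by
        rw [empPhi, minner_smul_right, minner_sum_right]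
    _ ≤ (n : ℝ)⁻¹ * (n * logA Θ) := by gcongr
    _ = ((n : ℝ)⁻¹ * n) * logA Θ := by ring
    _ ≤ logA Θ := mul_le_of_le_one_left (logA_nonneg Θ) hn

lemma nll_empPhi_nonneg {n : ℕ} (xs : Fin n → (Fin d → Bool)) (Θ : Mat d) :
    0 ≤ nll (empPhi xs) Θ :=
  sub_nonneg.2 (minner_empPhi_le_logA xs Θ)

lemma continuous_nll (Phin : Mat d) : Continuous (nll Phin) := by
  refine (Continuous.log ?_ fun Θ => ?_).sub (continuous_minner_left Phin)
  · exact continuous_finsetSum _ fun x _ => (continuous_minner_left (phi x)).rexp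
  · exact (Finset.sum_pos (fun x _ => Real.exp_pos _) Finset.univ_nonempty).ne'

lemma convex_setOf_isSymm : Convex ℝ {Θ : Mat d | Θ.IsSymm} :=
  fun _ hA _ hB a b _ _ _ => (hA.smul a).add (hB.smul b)

theorem nll_strictConvexOn (Phin : Mat d) :
    StrictConvexOn ℝ {Θ : Mat d | Θ.IsSymm} (nll Phin) := by
  refine ⟨convex_setOf_isSymm, fun A hA B hB hAB a b ha hb hab => ?_⟩
  have hident : ∃ x y,
      minner A (phi x) - minner B (phi x) ≠ minner A (phi y) - minner B (phi y) := by
    by_contra! h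
    refine hAB (sub_eq_zero.1 (eq_zero_of_minner_phi_const (hA.sub hB) fun x y => ?_))
    rw [minner_sub_left, minner_sub_left, h]
  have hlogA : logA (a • A + b • B) < a * logA A + b * logA B := by
    have hcomb : (fun x => minner (a • A + b • B) (phi x))
        = a • (fun x => minner A (phi x)) + b • fun x => minner B (phi x) := by
      ext x; simp [minner_add_left, minner_smul_left]
    rw [logA_eq_logSumExp, hcomb]
    exact logSumExp_convex_comb_lt hident ha hb hab
  have hlin : minner (a • A + b • B) Phin = a * minner A Phin + b * minner B Phin := by
    rw [minner_add_left, minner_smul_left, minner_smul_left]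
  simp only [nll, smul_eq_mul, hlin]
  linarith

end Likelihood

section Norms

open Filter Topology

variable {d : ℕ}

lemma abs_apply_le_vnorm (v : Fin d → ℝ) (j : Fin d) : |v j| ≤ vnorm v := by
  rw [vnorm, ← Real.sqrt_sq_eq_abs]
  exact Real.sqrt_le_sqrt (Finset.single_le_sum (f := fun i => v i ^ 2)
    (fun i _ => sq_nonneg _) (Finset.mem_univ j))

lemma vnorm_le_sum_abs (v : Fin d → ℝ) : vnorm v ≤ ∑ i, |v i| := by
  rw [vnorm, Real.sqrt_le_left (Finset.sum_nonneg fun i _ => abs_nonneg _)]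
  simpa only [sq_abs] using Finset.sum_sq_le_sq_sum_of_nonneg fun i _ => abs_nonneg (v i)

lemma vnorm_piSingle (i : Fin d) (x : ℝ) : vnorm (Pi.single i x) = |x| := by
  simp [vnorm, Pi.single_apply, Real.sqrt_sq_eq_abs]

lemma norm1_nonneg (M : Mat d) : 0 ≤ norm1 M :=
  Finset.sum_nonneg fun _ _ => Finset.sum_nonneg fun _ _ => abs_nonneg _

lemma abs_apply_le_norm1 (M : Mat d) (i j : Fin d) : |M i j| ≤ norm1 M :=
  (Finset.single_le_sum (f := fun l => |M i l|) (fun _ _ => abs_nonneg _)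
      (Finset.mem_univ j)).trans
    (Finset.single_le_sum (f := fun k => ∑ l, |M k l|)
      (fun _ _ => Finset.sum_nonneg fun _ _ => abs_nonneg _) (Finset.mem_univ i))

lemma convexOn_norm1 : ConvexOn ℝ Set.univ (norm1 : Mat d → ℝ) := by
  refine ⟨convex_univ, fun A _ B _ a b ha hb _ => ?_⟩
  simp only [norm1, smul_eq_mul, Finset.mul_sum, ← Finset.sum_add_distrib]
  refine Finset.sum_le_sum fun i _ => Finset.sum_le_sum fun j _ => ?_
  calc |a * A i j + b * B i j| ≤ |a * A i j| + |b * B i j| := abs_add_le _ _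
    _ = a * |A i j| + b * |B i j| := by
        rw [abs_mul, abs_mul, abs_of_nonneg ha, abs_of_nonneg hb]

lemma continuous_norm1 : Continuous (norm1 : Mat d → ℝ) :=
  continuous_finsetSum _ fun i _ => continuous_finsetSum _ fun j _ =>
    (continuous_id.matrix_elem i j).abs

lemma vnorm_mulVec_le_norm1 (M : Mat d) {v : Fin d → ℝ} (hv : vnorm v ≤ 1) :
    vnorm (M *ᵥ v) ≤ norm1 M := by
  refine (vnorm_le_sum_abs _).trans (Finset.sum_le_sum fun i _ => ?_)
  calc |(M *ᵥ v) i| = |∑ j, M i j * v j| := rfl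
    _ ≤ ∑ j, |M i j * v j| := Finset.abs_sum_le_sum_abs _ _
    _ ≤ ∑ j, |M i j| := Finset.sum_le_sum fun j _ => by
        rw [abs_mul]
        exact mul_le_of_le_one_right (abs_nonneg _) ((abs_apply_le_vnorm v j).trans hv)

lemma vnorm_mulVec_le_specNorm (M : Mat d) {v : Fin d → ℝ} (hv : vnorm v ≤ 1) :
    vnorm (M *ᵥ v) ≤ specNorm M :=
  le_csSup ⟨norm1 M, by rintro t ⟨w, hw, rfl⟩; exact vnorm_mulVec_le_norm1 M hw⟩ ⟨v, hv, rfl⟩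

lemma specNorm_le_one {M : Mat d} (hM : ∀ v, vnorm v ≤ 1 → vnorm (M *ᵥ v) ≤ 1) :
    specNorm M ≤ 1 :=
  csSup_le ⟨_, 0, by simp [vnorm], rfl⟩ (by rintro t ⟨v, hv, rfl⟩; exact hM v hv)

lemma abs_apply_le_specNorm (M : Mat d) (i j : Fin d) : |M i j| ≤ specNorm M := by
  have hj : vnorm (Pi.single j 1) ≤ 1 := by simp [vnorm_piSingle]
  simpa using (abs_apply_le_vnorm _ i).trans (vnorm_mulVec_le_specNorm M hj)

lemma minner_le_norm1 (M : Mat d) {B : Mat d} (hB : specNorm B ≤ 1) :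
    minner M B ≤ norm1 M := by
  rw [minner_eq_sum]
  refine Finset.sum_le_sum fun i _ => (le_abs_self _).trans <|
    (Finset.abs_sum_le_sum_abs _ _).trans <| Finset.sum_le_sum fun j _ => ?_
  rw [abs_mul]
  exact mul_le_of_le_one_right (abs_nonneg _) ((abs_apply_le_specNorm B i j).trans hB)

lemma minner_le_nucNorm (M : Mat d) {B : Mat d} (hB : specNorm B ≤ 1) :
    minner M B ≤ nucNorm M :=
  le_csSup ⟨norm1 M, by rintro t ⟨C, hC, rfl⟩; exact minner_le_norm1 M hC⟩ ⟨B, hB, rfl⟩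

lemma nucNorm_le {M : Mat d} {c : ℝ} (h : ∀ B : Mat d, specNorm B ≤ 1 → minner M B ≤ c) :
    nucNorm M ≤ c :=
  csSup_le ⟨_, 0, specNorm_le_one (by simp [vnorm]), rfl⟩
    (by rintro t ⟨B, hB, rfl⟩; exact h B hB)

lemma nucNorm_nonneg (M : Mat d) : 0 ≤ nucNorm M :=
  minner_zero_right M ▸ minner_le_nucNorm M (specNorm_le_one (by simp [vnorm]))

lemma abs_apply_le_nucNorm (M : Mat d) (i j : Fin d) : |M i j| ≤ nucNorm M := by
  obtain ⟨c, hc, hMc⟩ : ∃ c : ℝ, |c| = 1 ∧ M i j * c = |M i j| := by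
    rcases le_or_gt 0 (M i j) with h | h
    · exact ⟨1, by simp, by simp [abs_of_nonneg h]⟩
    · exact ⟨-1, by simp, by simp [abs_of_neg h]⟩
  have hB : specNorm (Matrix.single i j c) ≤ 1 := specNorm_le_one fun v hv => by
    rw [Matrix.single_mulVec_eq, ← Pi.single_smul', vnorm_piSingle, smul_eq_mul, mul_one,
      abs_mul, hc, one_mul]
    exact (abs_apply_le_vnorm v j).trans hv
  have hMB : minner M (Matrix.single i j c) = |M i j| := by
    simp [minner_eq_sum, Matrix.single_apply, ite_and, hMc]
  exact hMB ▸ minner_le_nucNorm M hB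

lemma nucNorm_le_add_norm1_sub (A B : Mat d) : nucNorm A ≤ nucNorm B + norm1 (A - B) :=
  nucNorm_le fun C hC => by
    rw [show minner A C = minner B C + minner (A - B) C by rw [minner_sub_left]; ring]
    exact add_le_add (minner_le_nucNorm B hC) (minner_le_norm1 _ hC)

lemma convexOn_nucNorm : ConvexOn ℝ Set.univ (nucNorm : Mat d → ℝ) :=
  ⟨convex_univ, fun A _ B _ a b ha hb _ => nucNorm_le fun C hC => by
    rw [minner_add_left, minner_smul_left, minner_smul_left]
    exact add_le_add (mul_le_mul_of_nonneg_left (minner_le_nucNorm A hC) ha)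
      (mul_le_mul_of_nonneg_left (minner_le_nucNorm B hC) hb)⟩

lemma norm1_sub_comm (A B : Mat d) : norm1 (A - B) = norm1 (B - A) := by
  simp only [norm1, Matrix.sub_apply, abs_sub_comm]

lemma continuous_nucNorm : Continuous (nucNorm : Mat d → ℝ) := by
  refine continuous_iff_continuousAt.2 fun A => ?_
  have hdist : Tendsto (fun M => norm1 (M - A)) (𝓝 A) (𝓝 0) := by
    have h0 : norm1 (A - A) = 0 := by simp [norm1]
    exact h0 ▸ (continuous_norm1.comp (continuous_sub_right A)).tendsto A
  refine tendsto_of_tendsto_of_tendsto_of_le_of_le (by simpa using tendsto_const_nhds.sub hdist)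
    (by simpa using tendsto_const_nhds.add hdist) (fun M => ?_)
    (fun M => nucNorm_le_add_norm1_sub M A)
  have := nucNorm_le_add_norm1_sub A M
  rw [norm1_sub_comm] at this
  linarith

end Norms

section Objective

open Filter Topology

variable {d : ℕ}

def objective (Phin : Mat d) (lam γ : ℝ) (p : Mat d × Mat d) : ℝ :=
  nll Phin (p.1 + p.2) + lam * (γ * norm1 p.1 + nucNorm p.2)

lemma continuous_objective (Phin : Mat d) (lam γ : ℝ) : Continuous (objective Phin lam γ) :=
  ((continuous_nll Phin).comp (continuous_fst.add continuous_snd)).add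
    (continuous_const.mul ((continuous_const.mul (continuous_norm1.comp continuous_fst)).add
      (continuous_nucNorm.comp continuous_snd)))

lemma isYSol_iff_isMinOn {Om T' : Submodule ℝ (Mat d)} {Phin : Mat d} {lam γ : ℝ}
    {p : Mat d × Mat d} :
    IsYSol Om T' Phin lam γ p ↔
      p ∈ (Om.prod T' : Set (Mat d × Mat d)) ∧
        IsMinOn (objective Phin lam γ) (Om.prod T' : Set (Mat d × Mat d)) p :=
  ⟨fun ⟨h1, h2, hmin⟩ => ⟨⟨h1, h2⟩, fun q hq => hmin q hq.1 hq.2⟩,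
    fun ⟨hp, hmin⟩ => ⟨hp.1, hp.2, fun q h1 h2 => hmin (show q ∈ Om.prod T' from ⟨h1, h2⟩)⟩⟩

lemma injOn_add_of_inf_eq_bot {Om T' : Submodule ℝ (Mat d)} (htrans : Om ⊓ T' = ⊥) :
    Set.InjOn (LinearMap.fst ℝ (Mat d) (Mat d) + LinearMap.snd ℝ (Mat d) (Mat d))
      (Om.prod T' : Set (Mat d × Mat d)) := by
  intro p hp q hq hpq
  simp only [LinearMap.add_apply, LinearMap.fst_apply, LinearMap.snd_apply] at hpq
  have hdiff : p.1 - q.1 = q.2 - p.2 := sub_eq_sub_iff_add_eq_add.2 (hpq.trans (add_comm _ _))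
  have hmem : p.1 - q.1 ∈ Om ⊓ T' := ⟨sub_mem hp.1 hq.1, hdiff ▸ sub_mem hq.2 hp.2⟩
  rw [htrans, Submodule.mem_bot, sub_eq_zero] at hmem
  exact Prod.ext hmem (add_left_cancel (hmem ▸ hpq))

theorem strictConvexOn_objective (Phin : Mat d) {lam γ : ℝ} (hlam : 0 ≤ lam) (hγ : 0 ≤ γ)
    {Om T' : Submodule ℝ (Mat d)} (hOm : ∀ M ∈ Om, M.IsSymm) (hT' : ∀ M ∈ T', M.IsSymm)
    (htrans : Om ⊓ T' = ⊥) :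
    StrictConvexOn ℝ (Om.prod T' : Set (Mat d × Mat d)) (objective Phin lam γ) := by
  have hnll := (nll_strictConvexOn Phin).comp_linearMap_of_injOn _ (Om.prod T').convex
    (fun p hp => (hOm _ hp.1).add (hT' _ hp.2)) (injOn_add_of_inf_eq_bot htrans)
  have hpen : ConvexOn ℝ Set.univ fun p : Mat d × Mat d => lam * (γ * norm1 p.1 + nucNorm p.2) :=
    (((convexOn_norm1.comp_linearMap (LinearMap.fst ℝ _ _)).smul hγ).add
      (convexOn_nucNorm.comp_linearMap (LinearMap.snd ℝ _ _))).smul hlam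
  exact hnll.add_convexOn (hpen.subset (Set.subset_univ _) (Om.prod T').convex)

lemma isCompact_entryBox (R : ℝ) : IsCompact {M : Mat d | ∀ i j, |M i j| ≤ R} := by
  have h := isCompact_univ_pi fun _ : Fin d => isCompact_univ_pi fun _ : Fin d =>
    isCompact_Icc (a := -R) (b := R)
  simp only [Set.pi, Set.mem_univ, Set.mem_Icc, forall_const] at h
  simp only [abs_le]
  exact h

lemma abs_apply_le_of_objective_le {n : ℕ} (xs : Fin n → (Fin d → Bool)) {lam γ c : ℝ}
    (hlam : 0 < lam) (hγ : 0 < γ) {p : Mat d × Mat d} (hp : objective (empPhi xs) lam γ p ≤ c) :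
    (∀ i j, |p.1 i j| ≤ c / (lam * γ)) ∧ ∀ i j, |p.2 i j| ≤ c / lam := by
  have hpen : lam * γ * norm1 p.1 + lam * nucNorm p.2 ≤ c := by
    have := nll_empPhi_nonneg xs (p.1 + p.2)
    simp only [objective] at hp
    linarith
  have h1 := mul_nonneg (mul_nonneg hlam.le hγ.le) (norm1_nonneg p.1)
  have h2 := mul_nonneg hlam.le (nucNorm_nonneg p.2)
  refine ⟨fun i j => ?_, fun i j => ?_⟩
  · rw [le_div_iff₀' (mul_pos hlam hγ)]
    linarith [mul_le_mul_of_nonneg_left (abs_apply_le_norm1 p.1 i j) (mul_pos hlam hγ).le]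
  · rw [le_div_iff₀' hlam]
    linarith [mul_le_mul_of_nonneg_left (abs_apply_le_nucNorm p.2 i j) hlam.le]

theorem exists_isMinOn_objective {n : ℕ} (xs : Fin n → (Fin d → Bool)) {lam γ : ℝ}
    (hlam : 0 < lam) (hγ : 0 < γ) (Om T' : Submodule ℝ (Mat d)) :
    ∃ p ∈ (Om.prod T' : Set (Mat d × Mat d)),
      IsMinOn (objective (empPhi xs) lam γ) (Om.prod T' : Set (Mat d × Mat d)) p := by
  set c := objective (empPhi xs) lam γ 0
  have hbox :=
    (isCompact_entryBox (d := d) (c / (lam * γ))).prod (isCompact_entryBox (d := d) (c / lam))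
  refine ContinuousOn.exists_isMinOn' ?_ (Om.prod T').closed_of_finiteDimensional
    (Om.prod T').zero_mem ?_
  · exact (continuous_objective _ _ _).continuousOn
  · filter_upwards [mem_inf_of_left hbox.compl_mem_cocompact] with p hp
    by_contra! hlt
    exact hp (abs_apply_le_of_objective_le xs hlam hγ hlt.le)

end Objective

theorem tangent_constrained_unique_solution_general (d n : ℕ)
    (xs : Fin n → (Fin d → Bool)) (lam γ : ℝ) (hlam : 0 < lam) (hγ : 0 < γ)
    (Om' T' : Submodule ℝ (Mat d))
    (hOm' : ∀ M ∈ Om', Matrix.IsSymm M) (hT' : ∀ M ∈ T', Matrix.IsSymm M)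
    (htrans : Om' ⊓ T' = ⊥) :
    (∃! p : Mat d × Mat d, IsYSol Om' T' (empPhi xs) lam γ p) ∧
    StrictConvexOn ℝ {Θ : Mat d | Θ.IsSymm} (nll (empPhi xs)) ∧
    StrictConvexOn ℝ ((Om'.prod T' : Submodule ℝ (Mat d × Mat d)) : Set (Mat d × Mat d))
      (fun p => nll (empPhi xs) (p.1 + p.2) + lam * (γ * norm1 p.1 + nucNorm p.2)) := by
  have hconv := strictConvexOn_objective (empPhi xs) hlam.le hγ.le hOm' hT' htrans
  refine ⟨?_, nll_strictConvexOn _, hconv⟩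
  obtain ⟨p, hp, hpmin⟩ := exists_isMinOn_objective xs hlam hγ Om' T'
  refine ⟨p, isYSol_iff_isMinOn.2 ⟨hp, hpmin⟩, fun q hq => ?_⟩
  obtain ⟨hq, hqmin⟩ := isYSol_iff_isMinOn.1 hq
  exact hconv.eq_of_isMinOn hqmin hpmin hq hp

/-- Proposition 4, uniqueness for the tangent-space constrained problem:
for transverse subspaces `Ω', T'` of `Sym(d)`, the problem
`min_{(S,L) ∈ Ω' × T'} ℓ(S+L) + λ(γ‖S‖₁ + ‖L‖_*)` is feasible and has a unique
solution; in particular the Ising negative log-likelihood is strictly convex on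
`Sym(d)` and the objective is strictly convex on `Ω' × T'`. -/
theorem tangent_constrained_unique_solution (d n : ℕ) (hd : 1 ≤ d) (hn : 1 ≤ n)
    (xs : Fin n → (Fin d → Bool)) (lam γ : ℝ) (hlam : 0 < lam) (hγ : 0 < γ)
    (Om' T' : Submodule ℝ (Mat d))
    (hOm' : ∀ M ∈ Om', Matrix.IsSymm M) (hT' : ∀ M ∈ T', Matrix.IsSymm M)
    (htrans : Om' ⊓ T' = ⊥) :
    (∃! p : Mat d × Mat d, IsYSol Om' T' (empPhi xs) lam γ p) ∧
    StrictConvexOn ℝ {Θ : Mat d | Θ.IsSymm} (nll (empPhi xs)) ∧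
    StrictConvexOn ℝ ((Om'.prod T' : Submodule ℝ (Mat d × Mat d)) : Set (Mat d × Mat d))
      (fun p => nll (empPhi xs) (p.1 + p.2) + lam * (γ * norm1 p.1 + nucNorm p.2)) :=
  tangent_constrained_unique_solution_general d n xs lam γ hlam hγ Om' T' hOm' hT' htrans

end IsingSL
end
end

section
/- Let E be a real normed vector space, f : E → ℝ convex and continuous, and V ⊆ E. Suppose x̂ ∈ V minimizes f over V, i.e. f(x̂) ≤ f(x) for all x ∈ V. Let γ : ℝ → E be a curve with γ(0) = x̂ that is differentiable at 0 and satisfies γ(t) ∈ V for all t ∈ (−1, 1). Then f(x̂ + γ'(0)) ≥ f(x̂). In particular, if x̂ is a smooth point of a variety V, then x̂ also minimizes f over the affine subspace x̂ + T_x̂V consisting of x̂ translated by all such curve derivatives. -/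
noncomputable section

open scoped BigOperators
open Matrix

namespace IsingSL

theorem _root_.ConvexOn.le_add_of_le_add_smul {E : Type*} [AddCommGroup E] [Module ℝ E]
    {f : E → ℝ} (hf : ConvexOn ℝ Set.univ f) {x w : E} {t : ℝ} (ht₀ : 0 < t) (ht₁ : t ≤ 1)
    (h : f x ≤ f (x + t • w)) : f x ≤ f (x + w) := by
  have hseg : (1 - t) • x + t • (x + w) = x + t • w := by
    rw [smul_add, sub_smul, one_smul]; abel
  rw [← hseg] at h
  exact h.trans <| hf.le_right_of_left_le' (Set.mem_univ _) (Set.mem_univ _)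
    (sub_nonneg.2 ht₁) ht₀ (sub_add_cancel 1 t) h

/-- Writing `γ t = x + t • slope γ 0 t`, convexity pushes `f x ≤ f (γ t)` out to
`f x ≤ f (x + slope γ 0 t)`, and the slope tends to `v`. -/
theorem _root_.ConvexOn.le_add_of_hasDerivWithinAt_Ioi {E : Type*} [NormedAddCommGroup E]
    [NormedSpace ℝ E] {f : E → ℝ} (hf : ConvexOn ℝ Set.univ f) {x v : E}
    (hfv : ContinuousAt f (x + v)) {γ : ℝ → E} (hγ₀ : γ 0 = x)
    (hγ : HasDerivWithinAt γ v (Set.Ioi 0) 0)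
    (hle : ∀ᶠ t in nhdsWithin 0 (Set.Ioi 0), f x ≤ f (γ t)) :
    f x ≤ f (x + v) := by
  have hslope : Filter.Tendsto (slope γ 0) (nhdsWithin 0 (Set.Ioi 0)) (nhds v) :=
    (hasDerivWithinAt_iff_tendsto_slope' (lt_irrefl _)).1 hγ
  have hγ_eq : ∀ t, γ t = x + t • slope γ 0 t := fun t => by
    simpa [hγ₀, add_comm] using (sub_smul_slope_vadd γ 0 t).symm
  have hlt_one : ∀ᶠ t in nhdsWithin (0 : ℝ) (Set.Ioi 0), t < 1 :=
    eventually_nhdsWithin_of_eventually_nhds (eventually_lt_nhds one_pos)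
  refine ge_of_tendsto (hfv.tendsto.comp (tendsto_const_nhds.add hslope)) ?_
  filter_upwards [hle, hlt_one, self_mem_nhdsWithin] with t hxt ht₁ (ht₀ : 0 < t)
  exact hf.le_add_of_le_add_smul ht₀ ht₁.le (hγ_eq t ▸ hxt)

theorem linearization_lemma_general {E : Type*} [NormedAddCommGroup E] [NormedSpace ℝ E]
    (f : E → ℝ) (hf : ConvexOn ℝ Set.univ f) (hfc : Continuous f)
    (V : Set E) (xh : E) (hmin : ∀ x ∈ V, f xh ≤ f x)
    (γ : ℝ → E) (v : E) (hγ0 : γ 0 = xh) (hderiv : HasDerivAt γ v 0)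
    (hγV : ∀ t ∈ Set.Ioo (-1 : ℝ) 1, γ t ∈ V) :
    f xh ≤ f (xh + v) := by
  have hγ_mem : ∀ᶠ t in nhds (0 : ℝ), γ t ∈ V :=
    Filter.mem_of_superset (Ioo_mem_nhds (by norm_num) one_pos) hγV
  exact hf.le_add_of_hasDerivWithinAt_Ioi hfc.continuousAt hγ0 hderiv.hasDerivWithinAt
    (nhdsWithin_le_nhds (hγ_mem.mono fun t ht => hmin _ ht))

/-- Lemma 8, linearization lemma: if a convex continuous function `f` is
minimized over a set `V` at `x̂`, and `γ` is a curve through `x̂` staying in `V` on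
`(-1,1)` that is differentiable at `0`, then `f(x̂ + γ'(0)) ≥ f(x̂)`; hence `x̂` also
minimizes `f` over `x̂` translated by all such curve derivatives (the tangent space at a
smooth point of a variety `V`). -/
theorem linearization_lemma {E : Type*} [NormedAddCommGroup E] [NormedSpace ℝ E]
    (f : E → ℝ) (hf : ConvexOn ℝ Set.univ f) (hfc : Continuous f)
    (V : Set E) (xh : E) (hxV : xh ∈ V) (hmin : ∀ x ∈ V, f xh ≤ f x)
    (γ : ℝ → E) (v : E) (hγ0 : γ 0 = xh) (hderiv : HasDerivAt γ v 0)
    (hγV : ∀ t ∈ Set.Ioo (-1 : ℝ) 1, γ t ∈ V) :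
    f xh ≤ f (xh + v) :=
  linearization_lemma_general f hf hfc V xh hmin γ v hγ0 hderiv hγV

end IsingSL
end
end

section
/- Let E be a real normed vector space, f : E → ℝ convex and continuous, C ⊆ E convex, and V ⊆ E. Suppose x̂ ∈ C ∩ V minimizes f over C ∩ V, i.e. f(x̂) ≤ f(x) for all x ∈ C ∩ V. Let γ : ℝ → E be a curve with γ(0) = x̂ that is differentiable at 0 and satisfies γ(t) ∈ V for all t ∈ (−1, 1), and suppose the point y = x̂ + γ'(0) lies in the interior of C. Then f(y) ≥ f(x̂). Equivalently, any point of the linearized feasible set C ∩ (x̂ + T_x̂V) realized by such a curve derivative that has strictly smaller objective value than x̂ must lie outside the interior of C (i.e., on the boundary of C). -/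
noncomputable section

open scoped BigOperators
open Matrix

/-!
The secant points `z t = x̂ + t⁻¹ • (γ t - x̂)` tend to `x̂ + v` as `t → 0⁺`, so they lie in the
interior of `C` for small `t > 0`. Then `γ t = (1 - t) • x̂ + t • z t` lies in `C ∩ V`, and
minimality together with convexity give `f x̂ ≤ f (γ t) ≤ (1 - t) f x̂ + t f (z t)`, i.e.
`f x̂ ≤ f (z t)`. Continuity of `f` passes this to the limit `x̂ + v`.
-/

open Filter Topology Set

section

variable {E : Type*} [NormedAddCommGroup E] [NormedSpace ℝ E]

theorem HasDerivAt.tendsto_add_inv_smul_sub {γ : ℝ → E} {v : E} (hγ : HasDerivAt γ v 0) :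
    Tendsto (fun t : ℝ => γ 0 + t⁻¹ • (γ t - γ 0)) (𝓝[>] 0) (𝓝 (γ 0 + v)) := by
  have hslope := (hasDerivAt_iff_tendsto_slope.mp hγ).mono_left
    (nhdsWithin_mono 0 fun t (ht : t ∈ Ioi 0) => ht.ne')
  simpa only [slope_def_module, sub_zero] using tendsto_const_nhds.add hslope

theorem sub_smul_add_smul_add_inv_smul_sub (x y : E) {t : ℝ} (ht : t ≠ 0) :
    (1 - t) • x + t • (x + t⁻¹ • (y - x)) = y := by
  rw [smul_add, smul_smul, mul_inv_cancel₀ ht, one_smul, sub_smul, one_smul]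
  abel

theorem Convex.eventually_mem_of_hasDerivAt {C : Set E} (hC : Convex ℝ C) {γ : ℝ → E} {v : E}
    (hγ : HasDerivAt γ v 0) (h0 : γ 0 ∈ C) (hv : γ 0 + v ∈ interior C) :
    ∀ᶠ t in 𝓝[>] 0, γ t ∈ C := by
  filter_upwards [hγ.tendsto_add_inv_smul_sub (isOpen_interior.mem_nhds hv),
    Ioo_mem_nhdsGT one_pos] with t hz ht
  rw [← sub_smul_add_smul_add_inv_smul_sub (γ 0) (γ t) ht.1.ne']
  exact hC h0 (interior_subset hz) (by linarith [ht.2]) ht.1.le (by ring)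

theorem ConvexOn.le_add_of_hasDerivAt_of_eventually_le {f : E → ℝ} (hf : ConvexOn ℝ univ f)
    {γ : ℝ → E} {v : E} (hγ : HasDerivAt γ v 0) (hfc : ContinuousAt f (γ 0 + v))
    (hle : ∀ᶠ t in 𝓝[>] 0, f (γ 0) ≤ f (γ t)) :
    f (γ 0) ≤ f (γ 0 + v) := by
  refine ge_of_tendsto (hfc.tendsto.comp hγ.tendsto_add_inv_smul_sub) ?_
  filter_upwards [hle, Ioo_mem_nhdsGT one_pos] with t hγt ht
  have hcomb := sub_smul_add_smul_add_inv_smul_sub (γ 0) (γ t) ht.1.ne'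
  have hsecant := hf.le_right_of_left_le' (mem_univ _) (mem_univ (γ 0 + t⁻¹ • (γ t - γ 0)))
    (by linarith [ht.2]) ht.1 (by ring) (hcomb ▸ hγt)
  rw [hcomb] at hsecant
  exact hγt.trans hsecant

end

namespace IsingSL

theorem linearization_lemma_with_convex_constraint_general {E : Type*}
    [NormedAddCommGroup E] [NormedSpace ℝ E]
    (f : E → ℝ) (hf : ConvexOn ℝ Set.univ f) (hfc : Continuous f)
    (Cs : Set E) (hCs : Convex ℝ Cs) (V : Set E)
    (xh : E) (hxC : xh ∈ Cs)
    (hmin : ∀ x ∈ Cs ∩ V, f xh ≤ f x)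
    (γ : ℝ → E) (v : E) (hγ0 : γ 0 = xh) (hderiv : HasDerivAt γ v 0)
    (hγV : ∀ t ∈ Set.Ioo (-1 : ℝ) 1, γ t ∈ V)
    (hy : xh + v ∈ interior Cs) :
    f xh ≤ f (xh + v) := by
  subst hγ0
  refine hf.le_add_of_hasDerivAt_of_eventually_le hderiv hfc.continuousAt ?_
  filter_upwards [hCs.eventually_mem_of_hasDerivAt hderiv hxC hy, Ioo_mem_nhdsGT one_pos]
    with t hγC ht
  exact hmin _ ⟨hγC, hγV t ⟨by linarith [ht.1], ht.2⟩⟩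

/-- Lemma 9, linearization with an additional convex constraint: if a
convex continuous function `f` is minimized over `C ∩ V` at `x̂` (`C` convex), and `γ`
is a curve through `x̂` staying in `V` on `(-1,1)` that is differentiable at `0` such
that `y = x̂ + γ'(0)` lies in the interior of `C`, then `f(y) ≥ f(x̂)`; equivalently any
point of the linearized feasible set realized by such a curve derivative with strictly
smaller objective value must lie on the boundary of `C`. -/
theorem linearization_lemma_with_convex_constraint {E : Type*}
    [NormedAddCommGroup E] [NormedSpace ℝ E]
    (f : E → ℝ) (hf : ConvexOn ℝ Set.univ f) (hfc : Continuous f)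
    (Cs : Set E) (hCs : Convex ℝ Cs) (V : Set E)
    (xh : E) (hxC : xh ∈ Cs) (hxV : xh ∈ V)
    (hmin : ∀ x ∈ Cs ∩ V, f xh ≤ f x)
    (γ : ℝ → E) (v : E) (hγ0 : γ 0 = xh) (hderiv : HasDerivAt γ v 0)
    (hγV : ∀ t ∈ Set.Ioo (-1 : ℝ) 1, γ t ∈ V)
    (hy : xh + v ∈ interior Cs) :
    f xh ≤ f (xh + v) :=
  linearization_lemma_with_convex_constraint_general f hf hfc Cs hCs V xh hxC hmin γ v hγ0 hderiv
    hγV hy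

end IsingSL
end
end
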